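/- Let u : ℂ → ℝ be locally Lipschitz and let σ(z) = conj(z) denote reflection in the real axis. Define Pu : ℂ → ℝ by Pu(z) = min{u(z), u(σ(z))} if Im z ≥ 0 and Pu(z) = max{u(z), u(σ(z))} if Im z ≤ 0 (the two formulas agree on the real axis). Then Pu is locally Lipschitz, and for every measurable set D ⊆ ℂ with σ(D) = D one has ∬_D |∇Pu|² dx dy = ∬_D |∇u|² dx dy, where the gradients exist almost everywhere by Rademacher's theorem. (This is the polarization identity for the Dirichlet integral used in the proof of Theorem 3.1.) -/

import Mathlib

open Set MeasureTheory

/-- Dirichlet integral `I(v,Q) = ∬_Q |∇v|² dx dy` (via the a.e.-defined Fréchet derivative). -/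
noncomputable def dirichletEnergy (v : ℂ → ℝ) (Q : Set ℂ) : ℝ :=
  ∫ z in Q, ‖fderiv ℝ v z‖ ^ 2

/-- A function is admissible for the configuration `(Q; E, F)` if it is continuous on the
closure of `Q`, locally Lipschitz in `Q`, equal to `1` on `E` and equal to `0` on `F`. -/
def IsAdmissible (Q E F : Set ℂ) (v : ℂ → ℝ) : Prop :=
  ContinuousOn v (closure Q) ∧
  (∀ z ∈ Q, ∃ K : NNReal, ∃ s ∈ nhds z, LipschitzOnWith K v s) ∧
  (∀ z ∈ E, v z = 1) ∧ (∀ z ∈ F, v z = 0)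

/-- The modulus `M(Q; E, F)`: the infimum of the Dirichlet integral over admissible functions. -/
noncomputable def modulus (Q E F : Set ℂ) : ℝ :=
  sInf {m : ℝ | ∃ v : ℂ → ℝ, IsAdmissible Q E F v ∧ m = dirichletEnergy v Q}

/-- `IsQuad Q a b c d`: the four distinct points `a b c d` (in this cyclic order) form a
positively oriented Jordan polygon (consecutive sides meet only at the shared vertex,
opposite sides are disjoint, the shoelace signed area is positive), and `Q` is the bounded
Jordan domain it encloses. -/
def IsQuad (Q : Set ℂ) (a b c d : ℂ) : Prop :=
  a ≠ b ∧ b ≠ c ∧ c ≠ d ∧ d ≠ a ∧ a ≠ c ∧ b ≠ d ∧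
  segment ℝ a b ∩ segment ℝ b c = {b} ∧
  segment ℝ b c ∩ segment ℝ c d = {c} ∧
  segment ℝ c d ∩ segment ℝ d a = {d} ∧
  segment ℝ d a ∩ segment ℝ a b = {a} ∧
  segment ℝ a b ∩ segment ℝ c d = ∅ ∧
  segment ℝ b c ∩ segment ℝ d a = ∅ ∧
  0 < ((starRingEnd ℂ) a * b + (starRingEnd ℂ) b * c +
        (starRingEnd ℂ) c * d + (starRingEnd ℂ) d * a).im ∧
  IsOpen Q ∧ Bornology.IsBounded Q ∧ IsConnected Q ∧
  frontier Q = segment ℝ a b ∪ segment ℝ b c ∪ segment ℝ c d ∪ segment ℝ d a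

/-- The conformal modulus `M(Q; a, b, c, d)` of a quadrilateral: the modulus of the
configuration with plate `E` the open side `(b,c)` and plate `F` the open side `(d,a)`. -/
noncomputable def quadModulus (Q : Set ℂ) (a b c d : ℂ) : ℝ :=
  modulus Q (openSegment ℝ b c) (openSegment ℝ d a)

/-! Put `v = u ∘ conj` and `A = {Pu = u}`. Since `min + max = u + v`, one has
`Pu ∘ conj = u + v - Pu`, so `A` is invariant under conjugation, and `Pu = v` off `A`.
Two locally Lipschitz functions that agree on a measurable set have a.e. equal derivatives
on it (at a Lebesgue density point of the set its tangent cone is the whole plane), hence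
`|∇Pu|² = |∇u|²` a.e. on `A` and `|∇Pu|² = |∇u|² ∘ conj` a.e. off `A`. Conjugation preserves
Lebesgue measure and the sets `D ∩ A` and `D \ A`, so the two Dirichlet integrals over `D`
agree. `Pu` is locally Lipschitz because `min u v` and `max u v` coincide on the real axis,
and a function that is `K`-Lipschitz on both halves `{φ ≥ 0}`, `{φ ≤ 0}` of a convex set is
`K`-Lipschitz on the whole set (a segment joining the halves meets `{φ = 0}`). -/

open Metric Filter Topology ENNReal

theorem Convex.lipschitzOnWith_of_nonneg_of_nonpos {E F : Type*} [SeminormedAddCommGroup E]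
    [NormedSpace ℝ E] [PseudoMetricSpace F] {f : E → F} {φ : E → ℝ} {K : NNReal} {s : Set E}
    (hs : Convex ℝ s) (hφ : ContinuousOn φ s)
    (hpos : LipschitzOnWith K f (s ∩ {x | 0 ≤ φ x}))
    (hneg : LipschitzOnWith K f (s ∩ {x | φ x ≤ 0})) :
    LipschitzOnWith K f s := by
  have cross : ∀ x ∈ s, ∀ y ∈ s, 0 ≤ φ x → φ y ≤ 0 → dist (f x) (f y) ≤ K * dist x y := by
    intro x hx y hy hφx hφy
    obtain ⟨w, hw, hφw⟩ : ∃ w ∈ segment ℝ x y, φ w = 0 :=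
      (convex_segment x y).isPreconnected.intermediate_value (right_mem_segment ℝ x y)
        (left_mem_segment ℝ x y) (hφ.mono (hs.segment_subset hx hy)) ⟨hφy, hφx⟩
    have hws : w ∈ s := hs.segment_subset hx hy hw
    calc dist (f x) (f y) ≤ dist (f x) (f w) + dist (f w) (f y) := dist_triangle _ _ _
      _ ≤ K * dist x w + K * dist w y :=
        add_le_add (hpos.dist_le_mul x ⟨hx, hφx⟩ w ⟨hws, hφw.ge⟩)
          (hneg.dist_le_mul w ⟨hws, hφw.le⟩ y ⟨hy, hφy⟩)
      _ = K * dist x y := by rw [← mul_add, dist_add_dist_of_mem_segment hw]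
  refine LipschitzOnWith.of_dist_le_mul fun x hx y hy => ?_
  rcases le_total 0 (φ x) with hφx | hφx <;> rcases le_total 0 (φ y) with hφy | hφy
  · exact hpos.dist_le_mul x ⟨hx, hφx⟩ y ⟨hy, hφy⟩
  · exact cross x hx y hy hφx hφy
  · rw [dist_comm, dist_comm x]
    exact cross y hy x hx hφy hφx
  · exact hneg.dist_le_mul x ⟨hx, hφx⟩ y ⟨hy, hφy⟩

theorem LocallyLipschitz.of_eqOn_nonneg_of_eqOn_nonpos {E F : Type*} [SeminormedAddCommGroup E]
    [NormedSpace ℝ E] [PseudoMetricSpace F] {f g₁ g₂ : E → F} {φ : E → ℝ} (hφ : Continuous φ)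
    (hg₁ : LocallyLipschitz g₁) (hg₂ : LocallyLipschitz g₂)
    (hf₁ : EqOn f g₁ {x | 0 ≤ φ x}) (hf₂ : EqOn f g₂ {x | φ x ≤ 0}) :
    LocallyLipschitz f := by
  intro x
  obtain ⟨K₁, t₁, ht₁, hK₁⟩ := hg₁ x
  obtain ⟨K₂, t₂, ht₂, hK₂⟩ := hg₂ x
  obtain ⟨r, hr, hball⟩ := Metric.mem_nhds_iff.1 (inter_mem ht₁ ht₂)
  refine ⟨max K₁ K₂, ball x r, ball_mem_nhds x hr,
    Convex.lipschitzOnWith_of_nonneg_of_nonpos (convex_ball x r) hφ.continuousOn ?_ ?_⟩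
  · intro y hy z hz
    rw [hf₁ hy.2, hf₁ hz.2]
    exact (hK₁.weaken (le_max_left _ _)) (hball hy.1).1 (hball hz.1).1
  · intro y hy z hz
    rw [hf₂ hy.2, hf₂ hz.2]
    exact (hK₂.weaken (le_max_right _ _)) (hball hy.1).2 (hball hz.1).2

section FiniteDimensional

variable {E F : Type*} [NormedAddCommGroup E] [NormedSpace ℝ E] [FiniteDimensional ℝ E]
  [MeasurableSpace E] [BorelSpace E] (μ : Measure E) [μ.IsAddHaarMeasure]
  [NormedAddCommGroup F] [NormedSpace ℝ F] [FiniteDimensional ℝ F]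

theorem LocallyLipschitz.ae_differentiableAt {f : E → F} (hf : LocallyLipschitz f) :
    ∀ᵐ x ∂μ, DifferentiableAt ℝ f x := by
  choose K t ht hlip using hf
  obtain ⟨T, hT, hcover⟩ := TopologicalSpace.countable_cover_nhds fun x =>
    interior_mem_nhds.2 (ht x)
  have local_diff : ∀ x ∈ T, ∀ᵐ y ∂μ, y ∈ interior (t x) → DifferentiableAt ℝ f y := by
    intro x _
    filter_upwards [((hlip x).mono interior_subset).ae_differentiableWithinAt_of_mem]
      with y hy hyt
    exact (hy hyt).differentiableAt (isOpen_interior.mem_nhds hyt)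
  filter_upwards [(ae_ball_iff hT).2 local_diff] with y hy
  obtain ⟨x, hxT, hyx⟩ := mem_iUnion₂.1 (hcover ▸ mem_univ y)
  exact hy x hxT hyx

theorem tangentConeAt_eq_univ_of_tendsto_measure_inter_div {s : Set E} {x : E}
    (h : Tendsto (fun r => μ (s ∩ closedBall x r) / μ (closedBall x r)) (𝓝[>] 0) (𝓝 1)) :
    tangentConeAt ℝ s x = univ := by
  refine eq_univ_of_forall fun y => ?_
  have approx : ∀ n : ℕ, ∃ r : ℝ, 0 < r ∧ r < 1 / (n + 1) ∧
      ∃ a ∈ closedBall y (1 / (n + 1)), x + r • a ∈ s := by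
    intro n
    have hε : (0 : ℝ) < 1 / (n + 1) := Nat.one_div_pos_of_nat
    obtain ⟨r, ⟨z, hzs, hz⟩, hr, hrn⟩ :=
      ((Measure.eventually_nonempty_inter_smul_of_density_one μ s x h _ measurableSet_closedBall
        (measure_closedBall_pos μ y hε).ne').and
        (Ioo_mem_nhdsGT hε)).exists
    rw [singleton_add] at hz
    obtain ⟨_, ⟨a, ha, rfl⟩, rfl⟩ := hz
    exact ⟨r, hr, hrn, a, ha, hzs⟩
  choose r hr hrn a ha has using approx
  have hr0 : Tendsto r atTop (𝓝 0) :=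
    squeeze_zero (fun n => (hr n).le) (fun n => (hrn n).le) tendsto_one_div_add_atTop_nhds_zero_nat
  have hay : Tendsto a atTop (𝓝 y) :=
    tendsto_iff_dist_tendsto_zero.2 <|
      squeeze_zero (fun n => dist_nonneg) (fun n => ha n) tendsto_one_div_add_atTop_nhds_zero_nat
  refine mem_tangentConeAt_of_seq atTop (fun n => (r n)⁻¹) (fun n => r n • a n) ?_
    (Eventually.of_forall has) ?_
  · simpa using hr0.smul hay
  · simpa [smul_smul, inv_mul_cancel₀ (hr _).ne'] using hay

theorem ae_restrict_fderiv_eq_of_eqOn {G : Type*} [NormedAddCommGroup G] [NormedSpace ℝ G]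
    {f g : E → G} {s : Set E} (hs : MeasurableSet s)
    (hf : ∀ᵐ x ∂μ.restrict s, DifferentiableAt ℝ f x)
    (hg : ∀ᵐ x ∂μ.restrict s, DifferentiableAt ℝ g x) (hfg : EqOn f g s) :
    ∀ᵐ x ∂μ.restrict s, fderiv ℝ f x = fderiv ℝ g x := by
  filter_upwards [Besicovitch.ae_tendsto_measure_inter_div μ s, ae_restrict_mem hs, hf, hg]
    with x hdensity hxs hfx hgx
  have hunique : UniqueDiffWithinAt ℝ s x :=
    ⟨by simp [tangentConeAt_eq_univ_of_tendsto_measure_inter_div μ hdensity], subset_closure hxs⟩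
  exact hunique.eq (hfx.hasFDerivAt.hasFDerivWithinAt.congr hfg.symm (hfg hxs).symm)
    hgx.hasFDerivAt.hasFDerivWithinAt

end FiniteDimensional

theorem MeasureTheory.MeasurePreserving.setLIntegral_eq_of_ae_eq_of_ae_eq_comp {α : Type*}
    [MeasurableSpace α] {μ : Measure α} {σ : α → α} (hσ : MeasurePreserving σ μ μ)
    (hσe : MeasurableEmbedding σ) {f g : α → ℝ≥0∞} {A D : Set α} (hA : MeasurableSet A)
    (hAσ : σ ⁻¹' A = A) (hDσ : σ ⁻¹' D = D) (hfA : f =ᵐ[μ.restrict A] g)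
    (hfAc : f =ᵐ[μ.restrict Aᶜ] g ∘ σ) :
    ∫⁻ x in D, f x ∂μ = ∫⁻ x in D, g x ∂μ := by
  have hDA : σ ⁻¹' (D \ A) = D \ A := by rw [preimage_sdiff, hDσ, hAσ]
  calc ∫⁻ x in D, f x ∂μ = ∫⁻ x in D ∩ A, f x ∂μ + ∫⁻ x in D \ A, f x ∂μ :=
        (lintegral_inter_add_sdiff f D hA).symm
    _ = ∫⁻ x in D ∩ A, g x ∂μ + ∫⁻ x in σ ⁻¹' (D \ A), g (σ x) ∂μ := by
        rw [hDA]
        congr 1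
        · exact lintegral_congr_ae (ae_restrict_of_ae_restrict_of_subset inter_subset_right hfA)
        · exact lintegral_congr_ae
            (ae_restrict_of_ae_restrict_of_subset (sdiff_subset_compl D A) hfAc)
    _ = ∫⁻ x in D, g x ∂μ := by
        rw [hσ.setLIntegral_comp_preimage_emb hσe, lintegral_inter_add_sdiff g D hA]

theorem norm_fderiv_comp_linearIsometryEquiv {𝕜 E E' F : Type*} [NontriviallyNormedField 𝕜]
    [NormedAddCommGroup E] [NormedSpace 𝕜 E] [NormedAddCommGroup E'] [NormedSpace 𝕜 E']
    [NormedAddCommGroup F] [NormedSpace 𝕜 F] (e : E ≃ₗᵢ[𝕜] E') (f : E' → F) (x : E) :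
    ‖fderiv 𝕜 (f ∘ e) x‖ = ‖fderiv 𝕜 f (e x)‖ := by
  rw [show f ∘ e = f ∘ e.toContinuousLinearEquiv from rfl,
    e.toContinuousLinearEquiv.comp_right_fderiv]
  exact (fderiv 𝕜 f (e x)).opNorm_comp_linearIsometryEquiv e

theorem dirichletEnergy_eq_toReal_lintegral (v : ℂ → ℝ) (Q : Set ℂ) :
    dirichletEnergy v Q = (∫⁻ z in Q, ENNReal.ofReal (‖fderiv ℝ v z‖ ^ 2)).toReal :=
  integral_eq_lintegral_of_nonneg_ae (ae_of_all _ fun _ => by positivity)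
    ((measurable_fderiv ℝ v).norm.pow_const 2).aestronglyMeasurable

open ComplexConjugate

noncomputable def polarization (u : ℂ → ℝ) (z : ℂ) : ℝ :=
  if 0 ≤ z.im then min (u z) (u (conj z)) else max (u z) (u (conj z))

section Polarization

variable {u : ℂ → ℝ} {z : ℂ}

theorem polarization_of_im_nonneg (hz : 0 ≤ z.im) :
    polarization u z = min (u z) (u (conj z)) :=
  if_pos hz

theorem polarization_of_im_nonpos (hz : z.im ≤ 0) :
    polarization u z = max (u z) (u (conj z)) := by
  rcases hz.lt_or_eq with hz | hz
  · exact if_neg hz.not_ge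
  · rw [polarization_of_im_nonneg hz.ge, Complex.conj_eq_iff_im.2 hz, min_self, max_self]

theorem polarization_eq_or : polarization u z = u z ∨ polarization u z = u (conj z) := by
  unfold polarization
  split_ifs
  exacts [min_choice _ _, max_choice _ _]

theorem polarization_conj : polarization u (conj z) = u z + u (conj z) - polarization u z := by
  rcases le_total 0 z.im with hz | hz
  · rw [polarization_of_im_nonneg hz, polarization_of_im_nonpos (by simpa using hz),
      Complex.conj_conj, ← min_add_max (u z), max_comm]
    ring
  · rw [polarization_of_im_nonpos hz, polarization_of_im_nonneg (by simpa using hz),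
      Complex.conj_conj, ← min_add_max (u z), min_comm]
    ring

theorem LocallyLipschitz.polarization (hu : LocallyLipschitz u) :
    LocallyLipschitz (polarization u) :=
  have hv : LocallyLipschitz fun z => u (conj z) :=
    hu.comp Complex.conjLIE.lipschitz.locallyLipschitz
  of_eqOn_nonneg_of_eqOn_nonpos Complex.continuous_im (hu.min hv) (hu.max hv)
    (fun _ => polarization_of_im_nonneg) (fun _ => polarization_of_im_nonpos)

theorem dirichletEnergy_polarization (hu : LocallyLipschitz u) {D : Set ℂ} (hD : conj ⁻¹' D = D) :
    dirichletEnergy (polarization u) D = dirichletEnergy u D := by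
  set σ := Complex.conjLIE
  set A := {z | polarization u z = u z}
  have hP := hu.polarization
  have hA : MeasurableSet A := (isClosed_eq hP.continuous hu.continuous).measurableSet
  have hAσ : σ ⁻¹' A = A := by
    ext z
    simp only [mem_preimage, mem_ofPred_eq, A, σ, Complex.conjLIE_apply, polarization_conj]
    constructor <;> intro h <;> linarith
  have hv : LocallyLipschitz (u ∘ σ) := hu.comp σ.lipschitz.locallyLipschitz
  have hfA : fderiv ℝ (polarization u) =ᵐ[volume.restrict A] fderiv ℝ u :=
    ae_restrict_fderiv_eq_of_eqOn volume hA (ae_restrict_of_ae (hP.ae_differentiableAt _))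
      (ae_restrict_of_ae (hu.ae_differentiableAt _)) fun _ hz => hz
  have hfAc : fderiv ℝ (polarization u) =ᵐ[volume.restrict Aᶜ] fderiv ℝ (u ∘ σ) :=
    ae_restrict_fderiv_eq_of_eqOn volume hA.compl (ae_restrict_of_ae (hP.ae_differentiableAt _))
      (ae_restrict_of_ae (hv.ae_differentiableAt _)) fun _ hz => polarization_eq_or.resolve_left hz
  rw [dirichletEnergy_eq_toReal_lintegral, dirichletEnergy_eq_toReal_lintegral]
  congr 1
  refine σ.measurePreserving.setLIntegral_eq_of_ae_eq_of_ae_eq_comp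
    σ.toHomeomorph.measurableEmbedding hA hAσ hD
    (hfA.fun_comp fun L => ENNReal.ofReal (‖L‖ ^ 2)) ?_
  filter_upwards [hfAc] with z hz
  simp only [Function.comp_apply, hz, norm_fderiv_comp_linearIsometryEquiv]

end Polarization

/-- The polarization identity for the Dirichlet integral: if `u` is locally Lipschitz and
`Pu z = min (u z) (u (conj z))` for `Im z ≥ 0`, `Pu z = max (u z) (u (conj z))` for
`Im z ≤ 0`, then `Pu` is locally Lipschitz and has the same Dirichlet integral as `u` over
every measurable set symmetric with respect to the real axis. -/
theorem polarization_dirichlet_eq (u Pu : ℂ → ℝ) (hu : LocallyLipschitz u)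
    (hPu : ∀ z : ℂ, Pu z =
      if 0 ≤ z.im then min (u z) (u ((starRingEnd ℂ) z))
      else max (u z) (u ((starRingEnd ℂ) z))) :
    LocallyLipschitz Pu ∧
    ∀ D : Set ℂ, MeasurableSet D → (starRingEnd ℂ) '' D = D →
      ∫ z in D, ‖fderiv ℝ Pu z‖ ^ 2 = ∫ z in D, ‖fderiv ℝ u z‖ ^ 2 := by
  obtain rfl : Pu = polarization u := funext hPu
  refine ⟨hu.polarization, fun D _ hD => dirichletEnergy_polarization hu ?_⟩
  rwa [Function.Involutive.image_eq_preimage_symm Complex.conj_conj] at hD
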